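/- arXiv:1306.6525 — 2 statements merged into one kernel-verified Lean document; each statement's English description precedes it below -/
import Mathlib

section
/- Let Φ be a linear map from matrices on ℂ^{a}⊗ℂ^{b} to matrices on ℂ^{a'}⊗ℂ^{b'}, with Choi matrix Ω_Φ on (ℂ^{a'}⊗ℂ^{b'}) ⊗ (ℂ^{a}⊗ℂ^{b}). Suppose Ω_Φ is a finite nonnegative combination of operators of the two following forms: (I) the image under the canonical permutation of tensor factors (A, A'B', B) → (A, B, A'B') of ζ ⊗ ρ, where ζ is an operator on ℂ^{a'} ⊗ (ℂ^{a}⊗ℂ^{b}) block-positive w.r.t. the cut a'|(ab) and ρ is a positive semidefinite b'×b' matrix; (II) the image under the canonical permutation of tensor factors (A, B, A'B') ordering of ρ' ⊗ ζ', where ρ' is a positive semidefinite a'×a' matrix and ζ' is an operator on ℂ^{b'} ⊗ (ℂ^{a}⊗ℂ^{b}) block-positive w.r.t. the cut b'|(ab). Then Φ is positive entanglement-annihilating (PEA) w.r.t. the output cut A|B. -/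
open Matrix Kronecker ComplexOrder BigOperators

namespace PaperEA

noncomputable section

/-- A matrix on a bipartite space is *separable* w.r.t. the cut `m|n` if it is a finite
sum of Kronecker products of positive semidefinite matrices. -/
def Sep {m n : Type*} [Fintype m] [Fintype n]
    (M : Matrix (m × n) (m × n) ℂ) : Prop :=
  ∃ (k : ℕ) (σ : Fin k → Matrix m m ℂ) (τ : Fin k → Matrix n n ℂ),
    (∀ i, (σ i).PosSemidef) ∧ (∀ i, (τ i).PosSemidef) ∧ M = ∑ i, σ i ⊗ₖ τ i

/-- Density matrix: positive semidefinite with unit trace. -/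
def IsDensity {m : Type*} [Fintype m] (ρ : Matrix m m ℂ) : Prop :=
  ρ.PosSemidef ∧ ρ.trace = 1

/-- A map on matrices is positive if it maps positive semidefinite matrices to
positive semidefinite matrices. -/
def IsPosMap {m n : Type*} [Fintype m] [Fintype n]
    (Φ : Matrix m m ℂ → Matrix n n ℂ) : Prop :=
  ∀ X : Matrix m m ℂ, X.PosSemidef → (Φ X).PosSemidef

/-- Choi matrix `(Φ ⊗ Id)[|Ψ+⟩⟨Ψ+|]` of a map `Φ` from `m×m` matrices to `n×n` matrices;
its entry at `((x,k),(y,l))` is `card m⁻¹ * Φ(|k⟩⟨l|) x y`. -/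
def choi {m n : Type*} [Fintype m] [DecidableEq m] [Fintype n]
    (Φ : Matrix m m ℂ → Matrix n n ℂ) : Matrix (n × m) (n × m) ℂ :=
  fun p q => (Fintype.card m : ℂ)⁻¹ * Φ (single p.2 q.2 1) p.1 q.1

/-- Trace-preserving map. -/
def IsTP {m n : Type*} [Fintype m] [Fintype n]
    (Φ : Matrix m m ℂ → Matrix n n ℂ) : Prop :=
  ∀ X : Matrix m m ℂ, (Φ X).trace = X.trace

/-- Completely positive map: positive semidefinite Choi matrix. -/
def IsCP {m n : Type*} [Fintype m] [DecidableEq m] [Fintype n]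
    (Φ : Matrix m m ℂ → Matrix n n ℂ) : Prop :=
  (choi Φ).PosSemidef

/-- Channel: completely positive and trace-preserving. -/
def IsChannel {m n : Type*} [Fintype m] [DecidableEq m] [Fintype n]
    (Φ : Matrix m m ℂ → Matrix n n ℂ) : Prop :=
  IsCP Φ ∧ IsTP Φ

/-- Entanglement-breaking: separable Choi matrix (output|input cut). -/
def IsEB {m n : Type*} [Fintype m] [DecidableEq m] [Fintype n]
    (Φ : Matrix m m ℂ → Matrix n n ℂ) : Prop :=
  Sep (choi Φ)

/-- Entanglement-breaking channel. -/
def IsEBChannel {m n : Type*} [Fintype m] [DecidableEq m] [Fintype n]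
    (Φ : Matrix m m ℂ → Matrix n n ℂ) : Prop :=
  IsChannel Φ ∧ IsEB Φ

/-- Entanglement-annihilating map: every density matrix is sent to a matrix separable
w.r.t. the output cut `A'|B'`. -/
def IsEA {A B A' B' : Type*} [Fintype A] [Fintype B] [Fintype A'] [Fintype B']
    (Φ : Matrix (A × B) (A × B) ℂ → Matrix (A' × B') (A' × B') ℂ) : Prop :=
  ∀ ρ : Matrix (A × B) (A × B) ℂ, IsDensity ρ → Sep (Φ ρ)

/-- Positive entanglement-annihilating map. -/
def IsPEA {A B A' B' : Type*} [Fintype A] [Fintype B] [Fintype A'] [Fintype B']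
    (Φ : Matrix (A × B) (A × B) ℂ → Matrix (A' × B') (A' × B') ℂ) : Prop :=
  IsPosMap Φ ∧ IsEA Φ

/-- Block-positive (Hermitian) operator w.r.t. the cut `m|n`:
`⟨x⊗y| ξ |x⊗y⟩ ≥ 0` for all product vectors. -/
def BlockPositive {m n : Type*} [Fintype m] [Fintype n]
    (ξ : Matrix (m × n) (m × n) ℂ) : Prop :=
  ξ.IsHermitian ∧ ∀ (x : m → ℂ) (y : n → ℂ),
    0 ≤ star (fun p : m × n => x p.1 * y p.2) ⬝ᵥ ξ *ᵥ fun p : m × n => x p.1 * y p.2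

/-- Partial trace over the first tensor factor. -/
def ptrace1 {m n : Type*} [Fintype m] (Ω : Matrix (m × n) (m × n) ℂ) : Matrix n n ℂ :=
  fun k l => ∑ i : m, Ω (i, k) (i, l)

/-- Partial transpose w.r.t. the first tensor factor. -/
def ptrans1 {m n : Type*} (ρ : Matrix (m × n) (m × n) ℂ) : Matrix (m × n) (m × n) ℂ :=
  fun p q => ρ (q.1, p.2) (p.1, q.2)

/-- Tensor product `Φ1 ⊗ Φ2` of (linear) maps on matrices. -/
def tensorMap {A B A' B' : Type*} [Fintype A] [DecidableEq A] [Fintype B] [DecidableEq B]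
    [Fintype A'] [Fintype B']
    (Φ1 : Matrix A A ℂ → Matrix A' A' ℂ) (Φ2 : Matrix B B ℂ → Matrix B' B' ℂ)
    (X : Matrix (A × B) (A × B) ℂ) : Matrix (A' × B') (A' × B') ℂ :=
  ∑ a1 : A, ∑ a2 : A, ∑ b1 : B, ∑ b2 : B,
    X (a1, b1) (a2, b2) • (Φ1 (single a1 a2 1) ⊗ₖ Φ2 (single b1 b2 1))

/-- Depolarizing map `Φ_q[X] = q X + (1−q) tr(X) I/d`. -/
def depolM {m : Type*} [Fintype m] [DecidableEq m] (q : ℝ)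
    (X : Matrix m m ℂ) : Matrix m m ℂ :=
  (q : ℂ) • X + ((1 - q : ℝ) : ℂ) • X.trace • (Fintype.card m : ℂ)⁻¹ • (1 : Matrix m m ℂ)

def pauli1 : Matrix (Fin 2) (Fin 2) ℂ := !![0, 1; 1, 0]
def pauli2 : Matrix (Fin 2) (Fin 2) ℂ := !![0, -Complex.I; Complex.I, 0]
def pauli3 : Matrix (Fin 2) (Fin 2) ℂ := !![1, 0; 0, -1]

/-- The unital qubit map `Υ_λ[X] = ½(tr(X) I + Σ_j λ_j tr(σ_j X) σ_j)`. -/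
def Ups (l1 l2 l3 : ℝ) (X : Matrix (Fin 2) (Fin 2) ℂ) : Matrix (Fin 2) (Fin 2) ℂ :=
  (2 : ℂ)⁻¹ • (X.trace • (1 : Matrix (Fin 2) (Fin 2) ℂ)
    + (l1 : ℂ) • (pauli1 * X).trace • pauli1
    + (l2 : ℂ) • (pauli2 * X).trace • pauli2
    + (l3 : ℂ) • (pauli3 * X).trace • pauli3)

/-- The maximally entangled unit vector `|Ψ+⟩ = d^{-1/2} Σ_i |i⟩⊗|i⟩`. -/
def maxEntVec (d : ℕ) : Fin d × Fin d → ℂ :=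
  fun p => if p.1 = p.2 then ((Real.sqrt d : ℂ))⁻¹ else 0

/-- The maximally entangled state `|Ψ+⟩⟨Ψ+|`. -/
def maxEntState (d : ℕ) : Matrix (Fin d × Fin d) (Fin d × Fin d) ℂ :=
  vecMulVec (maxEntVec d) (star (maxEntVec d))

/-- The vector `|γ⟩ = (|1⟩⊗|1⟩ + |d⟩⊗|d⟩)/√2`. -/
def gammaVec (d : ℕ) : Fin d × Fin d → ℂ :=
  fun p => if (p.1 : ℕ) = (p.2 : ℕ) ∧ ((p.1 : ℕ) = 0 ∨ (p.1 : ℕ) = d - 1)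
    then ((Real.sqrt 2 : ℂ))⁻¹ else 0

/-- The state `|γ⟩⟨γ|`. -/
def gammaState (d : ℕ) : Matrix (Fin d × Fin d) (Fin d × Fin d) ℂ :=
  vecMulVec (gammaVec d) (star (gammaVec d))

end

end PaperEA

open PaperEA

/-!
The Choi matrix recovers the map as `Φ X = d · Tr_{AB}[Ω_Φ (1 ⊗ Xᵀ)]`, which is linear in `Ω_Φ`.
Contracting a term of type (I) against `X` gives `Tr_{AB}[ζ (1 ⊗ Xᵀ)] ⊗ ρ` (and symmetrically for
type (II)). The first factor is positive semidefinite when `X` is: writing `X = ∑ |w⟩⟨w|`, the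
contraction against `|w⟩⟨w|` is the compression of `ζ` to the product vectors `x ⊗ w̄`, on which `ζ`
is nonnegative by block-positivity. Hence `Φ X` is a nonnegative combination of Kronecker products
of positive semidefinite matrices, i.e. separable, and in particular positive semidefinite.
-/

namespace PaperEA

variable {m n : Type*} [Fintype n]

/-- `contract X Ω = Tr_n[Ω (1 ⊗ Xᵀ)]`. -/
noncomputable def contract : Matrix n n ℂ →ₗ[ℂ] Matrix (m × n) (m × n) ℂ →ₗ[ℂ] Matrix m m ℂ :=
  LinearMap.mk₂ ℂ (fun X Ω => of fun p q => ∑ u, ∑ v, X u v * Ω (p, u) (q, v))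
    (fun X Y Ω => by ext; simp [add_mul, Finset.sum_add_distrib])
    (fun c X Ω => by ext; simp [Finset.mul_sum, mul_assoc])
    (fun X Ω Θ => by ext; simp [mul_add, Finset.sum_add_distrib])
    (fun c X Ω => by ext; simp [Finset.mul_sum, mul_left_comm])

theorem contract_apply (X : Matrix n n ℂ) (Ω : Matrix (m × n) (m × n) ℂ) (p q : m) :
    contract X Ω p q = ∑ u, ∑ v, X u v * Ω (p, u) (q, v) :=
  rfl

theorem apply_eq_card_smul_contract_choi [Fintype m] [DecidableEq n]
    (Φ : Matrix n n ℂ →ₗ[ℂ] Matrix m m ℂ) (X : Matrix n n ℂ) :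
    Φ X = (Fintype.card n : ℂ) • contract X (choi Φ) := by
  have hcard (u : n) : (Fintype.card n : ℂ) ≠ 0 :=
    Nat.cast_ne_zero.mpr (Fintype.card_pos_iff.mpr ⟨u⟩).ne'
  ext p q
  conv_lhs => rw [matrix_eq_sum_single X]
  simp only [map_sum, Matrix.sum_apply, Matrix.smul_apply, contract_apply, choi, Finset.mul_sum,
    smul_eq_mul]
  refine Finset.sum_congr rfl fun u _ => Finset.sum_congr rfl fun v _ => ?_
  have hsingle : single u v (X u v) = X u v • single u v 1 := by
    rw [smul_single, smul_eq_mul, mul_one]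
  rw [hsingle, map_smul, Matrix.smul_apply, smul_eq_mul, mul_left_comm,
    mul_inv_cancel_left₀ (hcard u)]

theorem BlockPositive.contract_vecMulVec_posSemidef [Fintype m] {ζ : Matrix (m × n) (m × n) ℂ}
    (hζ : BlockPositive ζ) (w : n → ℂ) : (contract (vecMulVec w (star w)) ζ).PosSemidef := by
  classical
  -- `V` is the isometry `x ↦ x ⊗ w̄`, so `Vᴴ ζ V` sees `ζ` only on product vectors.
  let V : Matrix (m × n) m ℂ := of fun p r => if p.1 = r then star (w p.2) else 0
  have hV : contract (vecMulVec w (star w)) ζ = Vᴴ * ζ * V := by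
    ext p q
    simp only [V, contract_apply, vecMulVec_apply, mul_apply, conjTranspose_apply, of_apply,
      Pi.star_apply, apply_ite, star_star, star_zero, ite_mul, zero_mul, mul_zero, Fintype.sum_prod_type,
      Finset.sum_ite_irrel, Finset.sum_const_zero, Finset.sum_ite_eq', Finset.mem_univ, if_true,
      Finset.sum_mul, mul_assoc]
    rw [Finset.sum_comm]
    exact Finset.sum_congr rfl fun _ _ => Finset.sum_congr rfl fun _ _ => by ring
  have hVx (x : m → ℂ) : V *ᵥ x = fun p => x p.1 * star w p.2 := by
    ext p
    simp [V, mulVec, dotProduct, mul_comm]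
  rw [hV]
  refine .of_dotProduct_mulVec_nonneg (isHermitian_conjTranspose_mul_mul V hζ.1) fun x => ?_
  have hquad : star x ⬝ᵥ (Vᴴ * ζ * V) *ᵥ x = star (V *ᵥ x) ⬝ᵥ ζ *ᵥ (V *ᵥ x) := by
    simp only [star_mulVec, dotProduct_mulVec, vecMul_vecMul, Matrix.mul_assoc, ← mulVec_mulVec]
  rw [hquad, hVx]
  exact hζ.2 x (star w)

theorem BlockPositive.contract_posSemidef [Fintype m] {ζ : Matrix (m × n) (m × n) ℂ}
    (hζ : BlockPositive ζ) {X : Matrix n n ℂ} (hX : X.PosSemidef) : (contract X ζ).PosSemidef := by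
  obtain ⟨r, w, rfl⟩ := posSemidef_iff_eq_sum_vecMulVec.mp hX
  rw [map_sum, LinearMap.sum_apply]
  exact posSemidef_sum _ fun i _ => hζ.contract_vecMulVec_posSemidef (w i)

theorem contract_submatrix_kronecker_left {k : Type*} (X : Matrix n n ℂ)
    (ζ : Matrix (m × n) (m × n) ℂ) (ρ : Matrix k k ℂ) :
    contract X ((ζ ⊗ₖ ρ).submatrix (fun p : (m × k) × n => ((p.1.1, p.2), p.1.2))
      (fun p : (m × k) × n => ((p.1.1, p.2), p.1.2))) = contract X ζ ⊗ₖ ρ := by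
  ext ⟨i, j⟩ ⟨i', j'⟩
  simp [contract_apply, Finset.sum_mul, mul_assoc]

theorem contract_submatrix_kronecker_right {k : Type*} (X : Matrix n n ℂ)
    (ρ : Matrix k k ℂ) (ζ : Matrix (m × n) (m × n) ℂ) :
    contract X ((ρ ⊗ₖ ζ).submatrix (fun p : (k × m) × n => (p.1.1, (p.1.2, p.2)))
      (fun p : (k × m) × n => (p.1.1, (p.1.2, p.2)))) = ρ ⊗ₖ contract X ζ := by
  ext ⟨i, j⟩ ⟨i', j'⟩
  simp [contract_apply, Finset.mul_sum, mul_left_comm]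

theorem Sep.posSemidef [Fintype m] {M : Matrix (m × n) (m × n) ℂ} (h : Sep M) : M.PosSemidef := by
  obtain ⟨k, σ, τ, hσ, hτ, rfl⟩ := h
  exact posSemidef_sum _ fun i _ => (hσ i).kronecker (hτ i)

theorem sep_sum_smul_kronecker [Fintype m] {K : ℕ} {r : Fin K → ℝ} (hr : ∀ k, 0 ≤ r k)
    {σ : Fin K → Matrix m m ℂ} {τ : Fin K → Matrix n n ℂ} (hσ : ∀ k, (σ k).PosSemidef)
    (hτ : ∀ k, (τ k).PosSemidef) : Sep (∑ k, (r k : ℂ) • (σ k ⊗ₖ τ k)) :=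
  ⟨K, fun k => (r k : ℂ) • σ k, τ, fun k => (hσ k).smul (by exact_mod_cast hr k), hτ,
    by simp only [smul_kronecker]⟩

theorem isPEA_of_forall_posSemidef_sep [Fintype m] {A B : Type*} [Fintype A] [Fintype B]
    {Φ : Matrix (A × B) (A × B) ℂ → Matrix (m × n) (m × n) ℂ}
    (h : ∀ X, X.PosSemidef → Sep (Φ X)) : IsPEA Φ :=
  ⟨fun X hX => (h X hX).posSemidef, fun ρ hρ => h ρ hρ.1⟩

end PaperEA

/-- if the Choi matrix of `Φ` is a nonnegative combination of
(suitably reordered) operators `ζ_BP^{A'|AB} ⊗ ρ^{B'}` and `ρ^{A'} ⊗ ζ_BP^{B'|AB}`,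
then `Φ` is PEA. -/
theorem stmt_3 (a b a' b' : ℕ)
    (Φ : Matrix (Fin a × Fin b) (Fin a × Fin b) ℂ →ₗ[ℂ]
      Matrix (Fin a' × Fin b') (Fin a' × Fin b') ℂ)
    (h : ∃ (K : ℕ) (c : Fin K → ℝ)
        (M : Fin K → Matrix ((Fin a' × Fin b') × (Fin a × Fin b))
          ((Fin a' × Fin b') × (Fin a × Fin b)) ℂ),
        (∀ k, 0 ≤ c k) ∧
        choi ⇑Φ = ∑ k, (c k : ℂ) • M k ∧
        ∀ k,
          (∃ (ζ : Matrix (Fin a' × (Fin a × Fin b)) (Fin a' × (Fin a × Fin b)) ℂ)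
              (ρ : Matrix (Fin b') (Fin b') ℂ),
              BlockPositive ζ ∧ ρ.PosSemidef ∧
              M k = (ζ ⊗ₖ ρ).submatrix
                (fun p : (Fin a' × Fin b') × (Fin a × Fin b) => ((p.1.1, p.2), p.1.2))
                (fun p : (Fin a' × Fin b') × (Fin a × Fin b) => ((p.1.1, p.2), p.1.2))) ∨
          (∃ (ρ' : Matrix (Fin a') (Fin a') ℂ)
              (ζ' : Matrix (Fin b' × (Fin a × Fin b)) (Fin b' × (Fin a × Fin b)) ℂ),
              ρ'.PosSemidef ∧ BlockPositive ζ' ∧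
              M k = (ρ' ⊗ₖ ζ').submatrix
                (fun p : (Fin a' × Fin b') × (Fin a × Fin b) => (p.1.1, (p.1.2, p.2)))
                (fun p : (Fin a' × Fin b') × (Fin a × Fin b) => (p.1.1, (p.1.2, p.2))))) :
    IsPEA ⇑Φ := by
  obtain ⟨K, c, M, hc, hchoi, hM⟩ := h
  refine isPEA_of_forall_posSemidef_sep fun X hX => ?_
  have hterm : ∀ k, ∃ (σ : Matrix (Fin a') (Fin a') ℂ) (τ : Matrix (Fin b') (Fin b') ℂ),
      σ.PosSemidef ∧ τ.PosSemidef ∧ contract X (M k) = σ ⊗ₖ τ := by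
    intro k
    rcases hM k with ⟨ζ, ρ, hζ, hρ, hMk⟩ | ⟨ρ', ζ', hρ', hζ', hMk⟩
    · exact ⟨_, ρ, hζ.contract_posSemidef hX, hρ, hMk ▸ contract_submatrix_kronecker_left X ζ ρ⟩
    · exact ⟨ρ', _, hρ', hζ'.contract_posSemidef hX,
        hMk ▸ contract_submatrix_kronecker_right X ρ' ζ'⟩
  choose σ τ hσ hτ hστ using hterm
  have hΦX : Φ X = ∑ k, ((Fintype.card (Fin a × Fin b) * c k : ℝ) : ℂ) • (σ k ⊗ₖ τ k) := by
    rw [apply_eq_card_smul_contract_choi, hchoi, map_sum, Finset.smul_sum]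
    refine Finset.sum_congr rfl fun k _ => ?_
    rw [map_smul, hστ k, smul_smul]
    push_cast
    rfl
  rw [hΦX]
  exact sep_sum_smul_kronecker (fun k => mul_nonneg (Nat.cast_nonneg _) (hc k)) hσ hτ
end

section
/- Let Φ be a linear map from matrices on ℂ^{a}⊗ℂ^{b} to matrices on ℂ^{a'}⊗ℂ^{b'}, with Choi matrix Ω_Φ on (ℂ^{a'}⊗ℂ^{b'}) ⊗ (ℂ^{a}⊗ℂ^{b}). Suppose that the partial trace of Ω_Φ over the output factor ℂ^{a'}⊗ℂ^{b'} equals (ab)^{−1} I_{ab}, and that Ω_Φ is a convex combination of density operators each of which is separable either w.r.t. the cut a'|(b'ab) (first output factor versus the rest) or w.r.t. the cut b'|(a'ab) (second output factor versus the rest), after the appropriate canonical permutation of tensor factors. Then Φ is an entanglement-annihilating channel w.r.t. the output cut A|B. -/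
/-!
Through the Choi matrix, `Φ ρ = ab · tr_in ((1 ⊗ ρᵀ) Ω_Φ)`. Contracting the input factor against a
positive `ρ` sends `σ ⊗ τ`, with `τ` living on one output factor and the input, to
`σ ⊗ tr_in ((1 ⊗ ρᵀ) τ)`, again a product of positive matrices. Hence each summand of the convex
decomposition of `Ω_Φ`, separable across `a'|(b'ab)` or `b'|(a'ab)`, contributes a matrix
separable across `a'|b'`. Complete positivity is the positivity of `Ω_Φ`, and trace preservation
is the partial-trace condition read off on matrix units.
-/

open Matrix Kronecker ComplexOrder BigOperators

open PaperEA


namespace PaperEA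

variable {m n p : Type*} [Fintype m] [Fintype n] [Fintype p]

theorem Sep.zero : Sep (0 : Matrix (m × n) (m × n) ℂ) :=
  ⟨0, finZeroElim, finZeroElim, finZeroElim, finZeroElim, by simp⟩

theorem Sep.add {M N : Matrix (m × n) (m × n) ℂ} (hM : Sep M) (hN : Sep N) : Sep (M + N) := by
  obtain ⟨k, σ, τ, hσ, hτ, rfl⟩ := hM
  obtain ⟨l, σ', τ', hσ', hτ', rfl⟩ := hN
  refine ⟨k + l, Fin.append σ σ', Fin.append τ τ', Fin.addCases ?_ ?_, Fin.addCases ?_ ?_, ?_⟩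
  all_goals simp_all [Fin.sum_univ_add]

theorem Sep.smul {M : Matrix (m × n) (m × n) ℂ} {r : ℂ} (hr : 0 ≤ r) (hM : Sep M) :
    Sep (r • M) := by
  obtain ⟨k, σ, τ, hσ, hτ, rfl⟩ := hM
  exact ⟨k, fun i => r • σ i, τ, fun i => (hσ i).smul hr, hτ,
    by simp [Finset.smul_sum, smul_kronecker]⟩

theorem Sep.sum {ι : Type*} (s : Finset ι) {M : ι → Matrix (m × n) (m × n) ℂ}
    (hM : ∀ i ∈ s, Sep (M i)) : Sep (∑ i ∈ s, M i) :=
  Finset.sum_induction M Sep (fun _ _ => Sep.add) Sep.zero hM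

theorem Sep.submatrix_swap {M : Matrix (m × n) (m × n) ℂ} (hM : Sep M) :
    Sep (M.submatrix Prod.swap Prod.swap) := by
  obtain ⟨k, σ, τ, hσ, hτ, rfl⟩ := hM
  refine ⟨k, τ, σ, hτ, hσ, ?_⟩
  ext x y
  simp [Matrix.sum_apply, mul_comm]

/-- `partialContract ρ Ω = tr₂ ((1 ⊗ ρᵀ) Ω)`. -/
def partialContract (ρ : Matrix m m ℂ) : Matrix (n × m) (n × m) ℂ →ₗ[ℂ] Matrix n n ℂ where
  toFun Ω := of fun i j => ∑ x, ∑ y, ρ x y * Ω (i, x) (j, y)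
  map_add' Ω Ω' := by ext; simp [mul_add, Finset.sum_add_distrib]
  map_smul' c Ω := by ext; simp [Finset.mul_sum, mul_left_comm]

omit [Fintype n] in
theorem partialContract_apply (ρ : Matrix m m ℂ) (Ω : Matrix (n × m) (n × m) ℂ) (i j : n) :
    partialContract ρ Ω i j = ∑ x, ∑ y, ρ x y * Ω (i, x) (j, y) := rfl

theorem partialContract_sum_vecMulVec [DecidableEq n] {r : ℕ} (v : Fin r → m → ℂ)
    (Ω : Matrix (n × m) (n × m) ℂ) :
    partialContract (∑ k, vecMulVec (v k) (star (v k))) Ω =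
      ∑ k, (of fun (q : n × m) (i : n) => if q.1 = i then star (v k q.2) else 0)ᴴ * Ω *
        of fun (q : n × m) (i : n) => if q.1 = i then star (v k q.2) else 0 := by
  ext i j
  simp only [partialContract_apply, Matrix.sum_apply, vecMulVec_apply, Pi.star_apply,
    RCLike.star_def, Finset.sum_mul, mul_apply, conjTranspose_apply, of_apply, apply_ite,
    RingHomCompTriple.comp_apply, RingHom.id_apply, star_zero, ite_mul, zero_mul,
    Fintype.sum_prod_type, Finset.sum_ite_irrel, Finset.sum_const_zero, Finset.sum_ite_eq',
    Finset.mem_univ, ↓reduceIte, mul_zero]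
  rw [Finset.sum_comm_cycle]
  refine Finset.sum_congr rfl fun k _ => ?_
  rw [Finset.sum_comm]
  simp only [mul_right_comm]

theorem posSemidef_partialContract {ρ : Matrix m m ℂ} {Ω : Matrix (n × m) (n × m) ℂ}
    (hρ : ρ.PosSemidef) (hΩ : Ω.PosSemidef) : (partialContract ρ Ω).PosSemidef := by
  classical
  obtain ⟨r, v, rfl⟩ := posSemidef_iff_eq_sum_vecMulVec.mp hρ
  rw [partialContract_sum_vecMulVec]
  exact posSemidef_sum _ fun k _ => hΩ.conjTranspose_mul_mul_same _

theorem Sep.partialContract_of_assoc {ρ : Matrix m m ℂ}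
    {Ω : Matrix ((n × p) × m) ((n × p) × m) ℂ} (hρ : ρ.PosSemidef)
    (hΩ : Sep (Ω.submatrix (fun q : n × (p × m) => ((q.1, q.2.1), q.2.2))
      (fun q : n × (p × m) => ((q.1, q.2.1), q.2.2)))) :
    Sep (partialContract ρ Ω) := by
  obtain ⟨k, σ, τ, hσ, hτ, hΩ⟩ := hΩ
  refine ⟨k, σ, fun i => partialContract ρ (τ i), hσ,
    fun i => posSemidef_partialContract hρ (hτ i), ?_⟩
  ext ⟨a, b⟩ ⟨a', b'⟩
  have hΩ x y : Ω ((a, b), x) ((a', b'), y) = ∑ i, σ i a a' * τ i (b, x) (b', y) := by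
    simpa [Matrix.sum_apply] using congr_fun₂ hΩ (a, b, x) (a', b', y)
  simp only [partialContract_apply, hΩ, Matrix.sum_apply, kroneckerMap_apply, Finset.mul_sum]
  rw [Finset.sum_comm_cycle]
  simp only [mul_left_comm]

theorem Sep.partialContract_of_swap_assoc {ρ : Matrix m m ℂ}
    {Ω : Matrix ((n × p) × m) ((n × p) × m) ℂ} (hρ : ρ.PosSemidef)
    (hΩ : Sep (Ω.submatrix (fun q : p × (n × m) => ((q.2.1, q.1), q.2.2))
      (fun q : p × (n × m) => ((q.2.1, q.1), q.2.2)))) :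
    Sep (partialContract ρ Ω) := by
  have hswap : Sep ((partialContract ρ Ω).submatrix Prod.swap Prod.swap) :=
    Sep.partialContract_of_assoc
      (Ω := Ω.submatrix (fun q => (q.1.swap, q.2)) (fun q => (q.1.swap, q.2))) hρ hΩ
  simpa [submatrix_submatrix] using hswap.submatrix_swap

section Choi

variable [DecidableEq m]

omit [Fintype n] in
theorem map_eq_sum_smul_map_single (Φ : Matrix m m ℂ →ₗ[ℂ] Matrix n n ℂ) (X : Matrix m m ℂ) :
    Φ X = ∑ x, ∑ y, X x y • Φ (single x y 1) := by
  conv_lhs => rw [matrix_eq_sum_single X]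
  simp [map_sum, ← map_smul, smul_single]

theorem ptrace1_choi_apply (Φ : Matrix m m ℂ → Matrix n n ℂ) (k l : m) :
    ptrace1 (choi Φ) k l = (Fintype.card m : ℂ)⁻¹ * (Φ (single k l 1)).trace := by
  simp [ptrace1, choi, trace, Finset.mul_sum]

theorem isTP_of_ptrace1_choi (Φ : Matrix m m ℂ →ₗ[ℂ] Matrix n n ℂ)
    (h : ptrace1 (choi Φ) = (Fintype.card m : ℂ)⁻¹ • 1) : IsTP Φ := by
  have htr (k l : m) : (Φ (single k l 1)).trace = (1 : Matrix m m ℂ) k l := by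
    have : Nonempty m := ⟨k⟩
    have hcard : (Fintype.card m : ℂ) ≠ 0 := Nat.cast_ne_zero.mpr Fintype.card_ne_zero
    have hkl := congr_fun₂ h k l
    rw [ptrace1_choi_apply, Matrix.smul_apply, smul_eq_mul] at hkl
    exact mul_left_cancel₀ (inv_ne_zero hcard) hkl
  intro X
  rw [map_eq_sum_smul_map_single Φ X]
  simp only [trace_sum, trace_smul, htr, one_apply, smul_eq_mul, mul_ite, mul_one, mul_zero,
    Finset.sum_ite_eq, Finset.mem_univ, ↓reduceIte]
  rfl

theorem map_eq_card_smul_partialContract_choi [Nonempty m]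
    (Φ : Matrix m m ℂ →ₗ[ℂ] Matrix n n ℂ) (ρ : Matrix m m ℂ) :
    Φ ρ = (Fintype.card m : ℂ) • partialContract ρ (choi Φ) := by
  have hcard : (Fintype.card m : ℂ) ≠ 0 := Nat.cast_ne_zero.mpr Fintype.card_ne_zero
  ext i j
  simp [map_eq_sum_smul_map_single Φ ρ, partialContract_apply, choi, Matrix.sum_apply,
    Finset.mul_sum, mul_left_comm _ (Fintype.card m : ℂ)⁻¹, hcard]

end Choi

end PaperEA

open PaperEA

/-- if `tr_out Ω_Φ = (ab)⁻¹ I` and `Ω_Φ` is a convex combination of density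
operators each of which is separable w.r.t. the cut `a'|(b'ab)` or w.r.t. the cut
`b'|(a'ab)` (after the appropriate reordering of tensor factors), then `Φ` is an EA
channel. -/
theorem stmt_4 (a b a' b' : ℕ)
    (Φ : Matrix (Fin a × Fin b) (Fin a × Fin b) ℂ →ₗ[ℂ]
      Matrix (Fin a' × Fin b') (Fin a' × Fin b') ℂ)
    (htp : ptrace1 (choi ⇑Φ) =
      ((a * b : ℕ) : ℂ)⁻¹ • (1 : Matrix (Fin a × Fin b) (Fin a × Fin b) ℂ))
    (h : ∃ (K : ℕ) (c : Fin K → ℝ)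
        (D : Fin K → Matrix ((Fin a' × Fin b') × (Fin a × Fin b))
          ((Fin a' × Fin b') × (Fin a × Fin b)) ℂ),
        (∀ k, 0 ≤ c k) ∧ (∑ k, c k) = 1 ∧ (∀ k, IsDensity (D k)) ∧
        (∀ k,
          Sep ((D k).submatrix
            (fun p : Fin a' × (Fin b' × (Fin a × Fin b)) => ((p.1, p.2.1), p.2.2))
            (fun p : Fin a' × (Fin b' × (Fin a × Fin b)) => ((p.1, p.2.1), p.2.2))) ∨
          Sep ((D k).submatrix
            (fun p : Fin b' × (Fin a' × (Fin a × Fin b)) => ((p.2.1, p.1), p.2.2))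
            (fun p : Fin b' × (Fin a' × (Fin a × Fin b)) => ((p.2.1, p.1), p.2.2)))) ∧
        choi ⇑Φ = ∑ k, (c k : ℂ) • D k) :
    IsChannel ⇑Φ ∧ IsEA ⇑Φ := by
  obtain ⟨K, c, D, hc, -, hD, hsep, hchoi⟩ := h
  have hc_nonneg (k : Fin K) : (0 : ℂ) ≤ c k := Complex.zero_le_real.mpr (hc k)
  have hTP : IsTP Φ := isTP_of_ptrace1_choi Φ (by simpa using htp)
  have hCP : IsCP Φ := by
    rw [IsCP, hchoi]
    exact posSemidef_sum _ fun k _ => (hD k).1.smul (hc_nonneg k)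
  refine ⟨⟨hCP, hTP⟩, fun ρ hρ => ?_⟩
  have : Nonempty (Fin a × Fin b) := by
    by_contra hempty
    simpa [trace, not_nonempty_iff.mp hempty] using hρ.2
  rw [map_eq_card_smul_partialContract_choi, hchoi, map_sum]
  refine (Sep.sum _ fun k _ => ?_).smul (Nat.cast_nonneg _)
  rw [map_smul]
  exact (hsep k).elim (Sep.partialContract_of_assoc hρ.1) (Sep.partialContract_of_swap_assoc hρ.1)
    |>.smul (hc_nonneg k)
end
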